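/- For every integer n ≥ 1, the number of Catalan words of length n avoiding the vincular pattern 2-12 equals the Fibonacci number F_{2n−1}. -/

import Mathlib

/-!
In a Catalan word every ascent is a step `+1`, so a 2-12 occurrence is an ascent whose top value
already occurred earlier. Allow letters `≥ 0` (still starting with 1, up-steps at most
1): then avoidance forces every letter after a `0` to be `0`, since an ascent `0 → 1` would match
the initial `1`. Let `a n`, `b n` count the avoiders of length `n` with letters `≥ 1`, resp.
`≥ 0`.
Dropping the leading `1` (and lowering the rest by one when the second letter is `2`) gives
`a (n+1) = a n + b n`; an avoider counted by `b` but not by `a` ends in a `0` that can be dropped,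
so `b (n+1) = a (n+1) + b n`. Hence `a n = F (2n-1)` and `b n = F (2n)`.
-/

/-- A Catalan word: a word of positive integers starting with 1 in which each
letter exceeds its predecessor by at most 1. -/
def IsCatalanWord {n : ℕ} (w : Fin n → ℕ) : Prop :=
  (∀ i, 1 ≤ w i) ∧ (∀ h : 0 < n, w ⟨0, h⟩ = 1) ∧
  ∀ i : ℕ, ∀ h : i + 1 < n, w ⟨i + 1, h⟩ ≤ w ⟨i, by omega⟩ + 1

/-- `w` contains the vincular pattern 2-12: there are indices `i < j` with
`w j < w i` and `w (j+1) = w i`. -/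
def Contains2_12 {n : ℕ} (w : Fin n → ℕ) : Prop :=
  ∃ i j : ℕ, ∃ hj : j + 1 < n, ∃ hij : i < j,
    w ⟨j, by omega⟩ < w ⟨i, by omega⟩ ∧ w ⟨j + 1, hj⟩ = w ⟨i, by omega⟩

section

variable {n : ℕ}

def IsCatalanWordAbove (f : ℕ) (w : Fin (n + 1) → ℕ) : Prop :=
  (∀ i, f ≤ w i) ∧ w 0 = 1 ∧ ∀ i : Fin n, w i.succ ≤ w i.castSucc + 1

theorem isCatalanWord_iff {w : Fin (n + 1) → ℕ} : IsCatalanWord w ↔ IsCatalanWordAbove 1 w :=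
  and_congr Iff.rfl <| and_congr ⟨fun h => h n.succ_pos, fun h _ => h⟩
    ⟨fun h i => h i (Nat.succ_lt_succ i.2), fun h i hi => h ⟨i, by omega⟩⟩

theorem contains2_12_iff {w : Fin (n + 1) → ℕ} :
    Contains2_12 w ↔
      ∃ i j : Fin n, i < j ∧ w j.castSucc < w i.castSucc ∧ w j.succ = w i.castSucc :=
  ⟨fun ⟨i, j, hj, hij, hlt, heq⟩ => ⟨⟨i, by omega⟩, ⟨j, by omega⟩, hij, hlt, heq⟩,
    fun ⟨⟨i, _⟩, ⟨j, hj⟩, hij, hlt, heq⟩ => ⟨i, j, by omega, hij, hlt, heq⟩⟩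

theorem contains2_12_add_const_iff {m : ℕ} {w : Fin m → ℕ} (c : ℕ) :
    Contains2_12 (fun i => w i + c) ↔ Contains2_12 w := by
  simp only [Contains2_12, add_lt_add_iff_right, add_left_inj]

theorem contains2_12_cons_iff {a : ℕ} {w : Fin (n + 1) → ℕ} (ha : ∀ i, a ≤ w i) :
    Contains2_12 (Fin.cons a w : Fin (n + 2) → ℕ) ↔ Contains2_12 w := by
  rw [contains2_12_iff, contains2_12_iff]
  constructor
  · rintro ⟨i, j, hij, hlt, heq⟩
    obtain ⟨j, rfl⟩ := Fin.exists_succ_eq.2 (Fin.ne_zero_of_lt hij)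
    rw [← Fin.succ_castSucc, Fin.cons_succ] at hlt
    rw [Fin.cons_succ] at heq
    induction i using Fin.cases with
    | zero => exact absurd hlt (by simpa using ha _)
    | succ i =>
      rw [← Fin.succ_castSucc, Fin.cons_succ] at hlt heq
      exact ⟨i, j, Fin.succ_lt_succ_iff.1 hij, hlt, heq⟩
  · rintro ⟨i, j, hij, hlt, heq⟩
    refine ⟨i.succ, j.succ, Fin.succ_lt_succ_iff.2 hij, ?_, ?_⟩ <;>
      simpa only [← Fin.succ_castSucc, Fin.cons_succ]

theorem contains2_12_snoc_iff {a : ℕ} {w : Fin (n + 1) → ℕ} (ha : ∀ i, a ≤ w i) :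
    Contains2_12 (Fin.snoc w a : Fin (n + 2) → ℕ) ↔ Contains2_12 w := by
  rw [contains2_12_iff, contains2_12_iff]
  constructor
  · rintro ⟨i, j, hij, hlt, heq⟩
    obtain ⟨i, rfl⟩ := Fin.exists_castSucc_eq.2 (Fin.ne_last_of_lt hij)
    simp only [Fin.snoc_castSucc] at hlt heq
    induction j using Fin.lastCases with
    | last =>
      rw [Fin.succ_last, Fin.snoc_last] at heq
      exact ((ha _).not_gt (heq ▸ hlt)).elim
    | cast j =>
      rw [Fin.succ_castSucc, Fin.snoc_castSucc] at heq
      exact ⟨i, j, Fin.castSucc_lt_castSucc_iff.1 hij, hlt, heq⟩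
  · rintro ⟨i, j, hij, hlt, heq⟩
    refine ⟨i.castSucc, j.castSucc, Fin.castSucc_lt_castSucc_iff.2 hij, ?_, ?_⟩ <;>
      simpa only [Fin.succ_castSucc, Fin.snoc_castSucc]

def catalanAvoiders (f n : ℕ) : Set (Fin (n + 1) → ℕ) :=
  {w | IsCatalanWordAbove f w ∧ ¬ Contains2_12 w}

-- A nonzero letter after a `0` would end an ascent `0 → 1`, matching the initial `1`.
theorem catalanAvoiders_zero_eq_zero_of_le {w : Fin (n + 1) → ℕ}
    (hw : w ∈ catalanAvoiders 0 n)
    {k : Fin (n + 1)} (hk : w k = 0) {j : Fin (n + 1)} (hkj : k ≤ j) : w j = 0 := by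
  obtain ⟨⟨-, h0, hstep⟩, hav⟩ := hw
  have step (i : Fin n) (hi : w i.castSucc = 0) : w i.succ = 0 := by
    by_contra hne
    have hi0 : 0 < (i : ℕ) := Nat.pos_of_ne_zero fun h => by
      simp [show i.castSucc = 0 from Fin.ext h, h0] at hi
    have hcast : (⟨0, i.pos⟩ : Fin n).castSucc = 0 := rfl
    exact hav <| contains2_12_iff.2
      ⟨⟨0, i.pos⟩, i, hi0, by simp [hcast, hi, h0],
        by rw [hcast, h0]; have := hstep i; omega⟩
  induction j using Fin.induction with
  | zero => rwa [← nonpos_iff_eq_zero.1 hkj]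
  | succ i ih =>
    rcases hkj.lt_or_eq with hlt | rfl
    · exact step i (ih (Fin.le_castSucc_iff.2 hlt))
    · exact hk

theorem cons_one_mem_catalanAvoiders_one_iff {v : Fin (n + 1) → ℕ} :
    (Fin.cons 1 v : Fin (n + 2) → ℕ) ∈ catalanAvoiders 1 (n + 1) ↔
      (∀ i, 1 ≤ v i) ∧ v 0 ≤ 2 ∧ (∀ i : Fin n, v i.succ ≤ v i.castSucc + 1) ∧
        ¬ Contains2_12 v := by
  constructor
  · rintro ⟨⟨hpos, -, hstep⟩, hav⟩
    have hpos' (i : Fin (n + 1)) : 1 ≤ v i := by simpa using hpos i.succ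
    refine ⟨hpos', by simpa using hstep 0, fun i => ?_,
      fun h => hav ((contains2_12_cons_iff hpos').2 h)⟩
    simpa [← Fin.succ_castSucc] using hstep i.succ
  · rintro ⟨hpos, h0, hstep, hav⟩
    refine ⟨⟨Fin.cases le_rfl hpos, rfl, Fin.cases (by simpa using h0) fun i => ?_⟩,
      fun h => hav ((contains2_12_cons_iff hpos).1 h)⟩
    simpa [← Fin.succ_castSucc] using hstep i

theorem catalanAvoiders_one_succ :
    catalanAvoiders 1 (n + 1) =
      Fin.cons (α := fun _ => ℕ) 1 '' catalanAvoiders 1 n ∪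
        (fun v => Fin.cons 1 fun i => v i + 1) '' catalanAvoiders 0 n := by
  ext w
  constructor
  · intro hw
    have hcons : Fin.cons 1 (Fin.tail w) = w := by
      have := Fin.cons_self_tail w
      rwa [hw.1.2.1] at this
    rw [← hcons, cons_one_mem_catalanAvoiders_one_iff] at hw
    obtain ⟨hpos, h2, hstep, hav⟩ := hw
    rcases (show Fin.tail w 0 = 1 ∨ Fin.tail w 0 = 2 by have := hpos 0; omega) with h1 | h2
    · exact Or.inl ⟨_, ⟨⟨hpos, h1, hstep⟩, hav⟩, hcons⟩
    · have hshift : (fun i => Fin.tail w i - 1 + 1) = Fin.tail w :=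
        funext fun i => Nat.sub_add_cancel (hpos i)
      refine Or.inr ⟨fun i => Fin.tail w i - 1, ⟨⟨fun _ => Nat.zero_le _, by simp [h2],
        fun i => by dsimp only; have := hstep i; omega⟩, ?_⟩,
        (congrArg (Fin.cons 1) hshift).trans hcons⟩
      rwa [← contains2_12_add_const_iff 1, hshift]
  · rintro (⟨v, ⟨⟨hpos, h0, hstep⟩, hav⟩, rfl⟩ |
      ⟨v, ⟨⟨-, h0, hstep⟩, hav⟩, rfl⟩)
    all_goals rw [cons_one_mem_catalanAvoiders_one_iff]
    · exact ⟨hpos, by omega, hstep, hav⟩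
    · exact ⟨fun _ => le_add_self, by simp [h0], fun i => by simpa using hstep i,
        by rwa [contains2_12_add_const_iff]⟩

theorem snoc_zero_mem_catalanAvoiders_zero_iff {v : Fin (n + 1) → ℕ} :
    (Fin.snoc v 0 : Fin (n + 2) → ℕ) ∈ catalanAvoiders 0 (n + 1) ↔
      v ∈ catalanAvoiders 0 n := by
  have hcast : (0 : Fin (n + 2)) = (0 : Fin (n + 1)).castSucc := rfl
  constructor
  · rintro ⟨⟨-, h0, hstep⟩, hav⟩
    refine ⟨⟨fun _ => Nat.zero_le _, by rwa [hcast, Fin.snoc_castSucc] at h0, fun i => ?_⟩,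
      fun h => hav ((contains2_12_snoc_iff fun _ => Nat.zero_le _).2 h)⟩
    simpa only [Fin.succ_castSucc, Fin.snoc_castSucc] using hstep i.castSucc
  · rintro ⟨⟨-, h0, hstep⟩, hav⟩
    refine ⟨⟨fun _ => Nat.zero_le _, by rwa [hcast, Fin.snoc_castSucc],
      Fin.lastCases (by simp) fun i => ?_⟩,
      fun h => hav ((contains2_12_snoc_iff fun _ => Nat.zero_le _).1 h)⟩
    simpa only [Fin.succ_castSucc, Fin.snoc_castSucc] using hstep i

theorem catalanAvoiders_zero_succ :
    catalanAvoiders 0 (n + 1) =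
      catalanAvoiders 1 (n + 1) ∪ (fun v => Fin.snoc v 0) '' catalanAvoiders 0 n := by
  ext w
  constructor
  · intro hw
    by_cases hpos : ∀ i, 1 ≤ w i
    · exact Or.inl ⟨⟨hpos, hw.1.2⟩, hw.2⟩
    obtain ⟨k, hk⟩ := not_forall.1 hpos
    have hsnoc : Fin.snoc (Fin.init w) 0 = w := by
      have := Fin.snoc_init_self w
      rwa [catalanAvoiders_zero_eq_zero_of_le hw (by omega) (Fin.le_last k)] at this
    rw [← hsnoc, snoc_zero_mem_catalanAvoiders_zero_iff] at hw
    exact Or.inr ⟨_, hw, hsnoc⟩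
  · rintro (⟨⟨-, hrest⟩, hav⟩ | ⟨v, hv, rfl⟩)
    · exact ⟨⟨fun _ => Nat.zero_le _, hrest⟩, hav⟩
    · exact snoc_zero_mem_catalanAvoiders_zero_iff.2 hv

theorem catalanAvoiders_of_length_one {f : ℕ} (hf : f ≤ 1) :
    catalanAvoiders f 0 = {fun _ => 1} := by
  ext w
  constructor
  · rintro ⟨⟨-, h0, -⟩, -⟩
    exact funext fun i => Fin.fin_one_eq_zero i ▸ h0
  · rintro rfl
    exact ⟨⟨fun _ => hf, rfl, finZeroElim⟩, fun h => (contains2_12_iff.1 h).choose.elim0⟩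

end

theorem encard_catalanAvoiders (n : ℕ) :
    (catalanAvoiders 1 n).encard = Nat.fib (2 * n + 1) ∧
      (catalanAvoiders 0 n).encard = Nat.fib (2 * n + 2) := by
  induction n with
  | zero => simp [catalanAvoiders_of_length_one]
  | succ n ih =>
    have hshift : Function.Injective
        fun v : Fin (n + 1) → ℕ => (Fin.cons 1 fun i => v i + 1 : Fin (n + 2) → ℕ) :=
      fun v v' h => funext fun i => by simpa using congrFun h i.succ
    have hone : (catalanAvoiders 1 (n + 1)).encard =
        Nat.fib (2 * n + 1) + Nat.fib (2 * n + 2) := by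
      rw [catalanAvoiders_one_succ, Set.encard_union_eq, (Fin.cons_right_injective _).encard_image,
        hshift.encard_image, ih.1, ih.2]
      rw [Set.disjoint_left]
      rintro _ ⟨v, ⟨⟨-, h0, -⟩, -⟩, rfl⟩ ⟨v', ⟨⟨-, h0', -⟩, -⟩, heq⟩
      have := congrFun (Fin.cons_right_injective 1 heq) 0
      omega
    have hsnoc : Function.Injective
        fun v : Fin (n + 1) → ℕ => (Fin.snoc v 0 : Fin (n + 2) → ℕ) :=
      fun v v' h => funext fun i => by simpa using congrFun h i.castSucc
    have hzero : (catalanAvoiders 0 (n + 1)).encard =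
        (catalanAvoiders 1 (n + 1)).encard + Nat.fib (2 * n + 2) := by
      rw [catalanAvoiders_zero_succ, Set.encard_union_eq, hsnoc.encard_image, ih.2]
      rw [Set.disjoint_left]
      rintro _ ⟨⟨hpos, -⟩, -⟩ ⟨v, -, rfl⟩
      simpa using hpos (Fin.last _)
    have h3 : Nat.fib (2 * n + 3) = Nat.fib (2 * n + 1) + Nat.fib (2 * n + 2) := Nat.fib_add_two
    have h4 : Nat.fib (2 * n + 4) = Nat.fib (2 * n + 2) + Nat.fib (2 * n + 3) := Nat.fib_add_two
    rw [show 2 * (n + 1) + 1 = 2 * n + 3 by ring, show 2 * (n + 1) + 2 = 2 * n + 4 by ring,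
      hzero, hone, h4, h3]
    push_cast
    exact ⟨rfl, add_comm _ _⟩

theorem catalan_avoid_2_12 (n : ℕ) (hn : 1 ≤ n) :
    Set.ncard {w : Fin n → ℕ | IsCatalanWord w ∧ ¬ Contains2_12 w} =
      Nat.fib (2 * n - 1) := by
  obtain ⟨n, rfl⟩ := Nat.exists_eq_add_of_le' hn
  have hset :
      {w : Fin (n + 1) → ℕ | IsCatalanWord w ∧ ¬ Contains2_12 w} = catalanAvoiders 1 n :=
    Set.ext fun _ => and_congr_left' isCatalanWord_iff
  rw [show 2 * (n + 1) - 1 = 2 * n + 1 by omega, hset, Set.ncard_def,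
    (encard_catalanAvoiders n).1, ENat.toNat_natCast]
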